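/- Let X be a Polish space (equipped with its Borel σ-algebra) and μ a finite nonatomic Borel measure on X with μ(X) > 0. Let B(X) be the space of bounded Borel functions X → ℝ with the supremum norm ‖·‖_∞. Suppose p : B(X) → ℝ is convex, invariant under strict rearrangements (p(ξ) = p(η) whenever ξ, η ∈ B(X) are equidistributed), and strongly continuous. Then p is Lipschitz continuous on bounded sets: for every R > 0 there exists L > 0 such that |p(ξ) − p(η)| ≤ L ‖ξ − η‖_∞ whenever ‖ξ‖_∞ ≤ R and ‖η‖_∞ ≤ R. -/

import Mathlib

open MeasureTheory Filter Topology

/-- A measure is nonatomic if every set of positive measure contains a subset of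
strictly smaller positive measure. -/
def Nonatomic {X : Type*} [MeasurableSpace X] (μ : Measure X) : Prop :=
  ∀ s : Set X, MeasurableSet s → 0 < μ s →
    ∃ t, t ⊆ s ∧ MeasurableSet t ∧ 0 < μ t ∧ μ t < μ s

/-- A real-valued function `p`, viewed on the domain `D` of functions `X → ℝ`, is
strongly continuous if `(p (ξ k))` converges whenever `(ξ k)` is a uniformly bounded
sequence in `D` converging `μ`-almost everywhere. -/
def StronglyContinuousOn {X : Type*} [MeasurableSpace X] (μ : Measure X)
    (D : Set (X → ℝ)) (p : (X → ℝ) → ℝ) : Prop :=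
  ∀ ξ : ℕ → X → ℝ, (∀ k, ξ k ∈ D) → (∃ C : ℝ, ∀ k x, |ξ k x| ≤ C) →
    (∀ᵐ x ∂μ, ∃ l : ℝ, Tendsto (fun k => ξ k x) atTop (𝓝 l)) →
    ∃ L : ℝ, Tendsto (fun k => p (ξ k)) atTop (𝓝 L)

/-!
By rearrangement invariance every bounded Borel function may be replaced by an equidistributed one
of the form `Q ∘ g`, where `g` is a fixed function with uniform law on `[0, 1]` (the cdf of the
atomless law of a Borel embedding into `ℝ`) and `Q` is a monotone quantile function with the same
bound. If `p` were unbounded above on a sup-norm ball, Helly's selection theorem applied to the `Q`s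
would give an a.e. convergent sequence of such rearrangements along which `p → ∞`, contradicting
strong continuity. A convex function bounded above by `M` on the ball of radius `4R` is bounded
below by `2 p 0 - M` on the ball of radius `R`, and is Lipschitz there: `η` is a convex combination
of `ξ` and a point `ζ` of the larger ball on the ray from `ξ` through `η`.
-/

open Set ProbabilityTheory

namespace ProbabilityTheory

/-- On `Ioo 0 1` this is the quantile function `t ↦ inf {y | t ≤ cdf ρ y}` of a measure carried
by `Icc (-r) r`; capping `t` at `1` and truncating to `Icc (-r) r` make it monotone with values in
`Icc (-r) r` on all of `ℝ`. -/
noncomputable def boundedQuantile (ρ : Measure ℝ) (r t : ℝ) : ℝ :=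
  sInf {y ∈ Icc (-r) r | min t 1 ≤ cdf ρ y}

section BoundedQuantile

variable {ρ : Measure ℝ} [IsProbabilityMeasure ρ] {r : ℝ}

lemma cdf_eq_one_of_le (hρ : ∀ᵐ y ∂ρ, y ∈ Icc (-r) r) {y : ℝ} (hy : r ≤ y) : cdf ρ y = 1 := by
  have h : ρ (Iic y) = 1 := by
    refine (prob_compl_eq_zero_iff measurableSet_Iic).1 (measure_mono_null ?_ (ae_iff.1 hρ))
    exact fun z hz hz' => hz (hz'.2.trans hy)
  rwa [← ofReal_cdf, ENNReal.ofReal_eq_one] at h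

lemma cdf_eq_zero_of_lt (hρ : ∀ᵐ y ∂ρ, y ∈ Icc (-r) r) {y : ℝ} (hy : y < -r) : cdf ρ y = 0 := by
  have h : ρ (Iic y) = 0 := by
    refine measure_mono_null ?_ (ae_iff.1 hρ)
    exact fun z hz hz' => (hz'.1.trans hz).not_gt hy
  rw [← ofReal_cdf, ENNReal.ofReal_eq_zero] at h
  exact h.antisymm (cdf_nonneg ρ y)

lemma self_mem_boundedQuantile_set (hρ : ∀ᵐ y ∂ρ, y ∈ Icc (-r) r) (t : ℝ) :
    r ∈ {y ∈ Icc (-r) r | min t 1 ≤ cdf ρ y} := by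
  obtain ⟨y, hy⟩ := hρ.exists
  exact ⟨⟨by linarith [hy.1, hy.2], le_rfl⟩, (cdf_eq_one_of_le hρ le_rfl).symm ▸ min_le_right t 1⟩

lemma boundedQuantile_mem_Icc (hρ : ∀ᵐ y ∂ρ, y ∈ Icc (-r) r) (t : ℝ) :
    boundedQuantile ρ r t ∈ Icc (-r) r :=
  ⟨le_csInf ⟨r, self_mem_boundedQuantile_set hρ t⟩ fun _ hy => hy.1.1,
    csInf_le ⟨-r, fun _ hy => hy.1.1⟩ (self_mem_boundedQuantile_set hρ t)⟩

lemma monotone_boundedQuantile (hρ : ∀ᵐ y ∂ρ, y ∈ Icc (-r) r) :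
    Monotone (boundedQuantile ρ r) := fun _ _ hst =>
  csInf_le_csInf ⟨-r, fun _ hy => hy.1.1⟩ ⟨r, self_mem_boundedQuantile_set hρ _⟩
    fun _ hy => ⟨hy.1, (min_le_min_right 1 hst).trans hy.2⟩

lemma boundedQuantile_le_iff (hρ : ∀ᵐ y ∂ρ, y ∈ Icc (-r) r) {t : ℝ} (ht : t ∈ Ioo 0 1) (y : ℝ) :
    boundedQuantile ρ r t ≤ y ↔ t ≤ cdf ρ y := by
  set S := {y ∈ Icc (-r) r | min t 1 ≤ cdf ρ y}
  have hS : BddBelow S := ⟨-r, fun _ hy => hy.1.1⟩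
  have hmin : min t 1 = t := min_eq_left ht.2.le
  -- `cdf ρ` is right continuous, so the infimum of `S` belongs to `S`
  have hmem : t ≤ cdf ρ (boundedQuantile ρ r t) := by
    have hev : ∀ᶠ z in 𝓝[>] (boundedQuantile ρ r t), t ≤ cdf ρ z := by
      filter_upwards [self_mem_nhdsWithin] with z hz
      obtain ⟨s, hs, hsz⟩ := exists_lt_of_csInf_lt ⟨r, self_mem_boundedQuantile_set hρ t⟩ hz
      exact (hmin ▸ hs.2).trans (monotone_cdf ρ hsz.le)
    exact ge_of_tendsto ((cdf ρ).right_continuous _ |>.tendsto.mono_left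
      (nhdsWithin_mono _ Ioi_subset_Ici_self)) hev
  refine ⟨fun h => hmem.trans (monotone_cdf ρ h), fun h => ?_⟩
  rcases le_or_gt y r with hyr | hry
  · refine csInf_le hS ⟨⟨?_, hyr⟩, hmin.symm ▸ h⟩
    by_contra! hy
    linarith [cdf_eq_zero_of_lt hρ hy, ht.1]
  · exact (boundedQuantile_mem_Icc hρ t).2.trans hry.le

lemma map_boundedQuantile (hρ : ∀ᵐ y ∂ρ, y ∈ Icc (-r) r) :
    (volume.restrict (Icc 0 1)).map (boundedQuantile ρ r) = ρ := by
  have hQ := (monotone_boundedQuantile hρ).measurable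
  have hIoo : volume.restrict (Icc (0 : ℝ) 1) = volume.restrict (Ioo 0 1) :=
    (Measure.restrict_congr_set Ioo_ae_eq_Icc).symm
  refine Measure.ext_of_Iic _ _ fun y => ?_
  have hset : boundedQuantile ρ r ⁻¹' Iic y ∩ Ioo 0 1 = Iic (cdf ρ y) ∩ Ioo 0 1 := by
    ext t
    simp only [mem_inter_iff, mem_preimage, mem_Iic]
    exact and_congr_left fun ht => boundedQuantile_le_iff hρ ht y
  have hIcc : Iic (cdf ρ y) ∩ Icc 0 1 = Icc 0 (cdf ρ y) :=
    ext fun t => ⟨fun h => ⟨h.2.1, h.1⟩, fun h => ⟨h.2, h.1, h.2.trans (cdf_le_one ρ y)⟩⟩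
  rw [Measure.map_apply hQ measurableSet_Iic, hIoo, Measure.restrict_apply (hQ measurableSet_Iic),
    hset, ← Measure.restrict_apply measurableSet_Iic, ← hIoo,
    Measure.restrict_apply measurableSet_Iic, hIcc, Real.volume_Icc, sub_zero, ofReal_cdf]

lemma leftLim_cdf [NullSingletonClass ρ] (y : ℝ) : Function.leftLim (cdf ρ) y = cdf ρ y := by
  have h := (cdf ρ).measure_singleton y
  rw [measure_cdf, measure_singleton, eq_comm, ENNReal.ofReal_eq_zero, sub_nonpos] at h
  exact le_antisymm ((monotone_cdf ρ).leftLim_le le_rfl) h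

lemma map_cdf [NullSingletonClass ρ] (hρ : ∀ᵐ y ∂ρ, y ∈ Icc (-r) r) :
    ρ.map (cdf ρ) = volume.restrict (Icc 0 1) := by
  have hQ := (monotone_boundedQuantile hρ).measurable
  have hcdf_quantile : ∀ t ∈ Ioo (0 : ℝ) 1, cdf ρ (boundedQuantile ρ r t) = t := by
    intro t ht
    refine le_antisymm ?_ ((boundedQuantile_le_iff hρ ht _).1 le_rfl)
    rw [← leftLim_cdf]
    refine le_of_tendsto ((monotone_cdf ρ).tendsto_leftLim _) ?_
    filter_upwards [self_mem_nhdsWithin] with y hy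
    exact (not_le.1 fun h => hy.not_ge ((boundedQuantile_le_iff hρ ht y).2 h)).le
  have hae : cdf ρ ∘ boundedQuantile ρ r =ᵐ[volume.restrict (Icc 0 1)] id := by
    rw [← Measure.restrict_congr_set Ioo_ae_eq_Icc]
    exact (ae_restrict_iff' measurableSet_Ioo).2 (ae_of_all _ hcdf_quantile)
  calc ρ.map (cdf ρ) = ((volume.restrict (Icc 0 1)).map (boundedQuantile ρ r)).map (cdf ρ) := by
        rw [map_boundedQuantile hρ]
    _ = volume.restrict (Icc 0 1) := by
      rw [Measure.map_map (monotone_cdf ρ).measurable hQ, Measure.map_congr hae, Measure.map_id]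

end BoundedQuantile

end ProbabilityTheory

lemma tendsto_of_tendsto_rat_of_continuousAt {Q : ℕ → ℝ → ℝ} (hQ : ∀ k, Monotone (Q k))
    {f : ℚ → ℝ} (hf : ∀ q : ℚ, Tendsto (fun k => Q k q) atTop (𝓝 (f q)))
    (hbdd : BddBelow (range f)) {t : ℝ}
    (ht : ContinuousAt (fun s : ℝ => sInf (f '' {q : ℚ | s < q})) t) :
    Tendsto (fun k => Q k t) atTop (𝓝 (sInf (f '' {q : ℚ | t < q}))) := by
  have hne : ∀ s : ℝ, (f '' {q : ℚ | s < q}).Nonempty := fun s =>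
    let ⟨q, hq⟩ := exists_rat_gt s; ⟨f q, q, hq, rfl⟩
  have hbdd' : ∀ s : ℝ, BddBelow (f '' {q : ℚ | s < q}) := fun s =>
    hbdd.mono (image_subset_range _ _)
  refine tendsto_order.2 ⟨fun a ha => ?_, fun b hb => ?_⟩
  · have hev : ∀ᶠ s : ℝ in 𝓝[<] t, a < sInf (f '' {q : ℚ | s < q}) :=
      (ht.eventually (lt_mem_nhds ha)).filter_mono nhdsWithin_le_nhds
    obtain ⟨s, has, hst⟩ := (hev.and self_mem_nhdsWithin).exists
    obtain ⟨q, hsq, hqt⟩ := exists_rat_btwn hst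
    have haq : a < f q := has.trans_le (csInf_le (hbdd' s) ⟨q, hsq, rfl⟩)
    filter_upwards [(hf q).eventually (lt_mem_nhds haq)] with k hk
    exact hk.trans_le (hQ k hqt.le)
  · obtain ⟨_, ⟨q, htq, rfl⟩, hqb⟩ := exists_lt_of_csInf_lt (hne t) hb
    filter_upwards [(hf q).eventually (gt_mem_nhds hqb)] with k hk
    exact (hQ k (le_of_lt htq)).trans_lt hk

/-- Helly's selection theorem. -/
theorem exists_subseq_tendsto_of_monotone {r : ℝ} {Q : ℕ → ℝ → ℝ} (hQ : ∀ k, Monotone (Q k))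
    (hbd : ∀ k t, Q k t ∈ Icc (-r) r) :
    ∃ φ : ℕ → ℕ, StrictMono φ ∧ ∃ D : Set ℝ, D.Countable ∧
      ∀ t ∉ D, ∃ l, Tendsto (fun k => Q (φ k) t) atTop (𝓝 l) := by
  obtain ⟨a, φ, hφ, ha⟩ := SeqCompactSpace.tendsto_subseq
    (fun k (q : ℚ) => (⟨Q k q, hbd k q⟩ : Icc (-r) r))
  set f : ℚ → ℝ := fun q => a q
  have hf : ∀ q : ℚ, Tendsto (fun k => Q (φ k) q) atTop (𝓝 (f q)) := fun q =>
    (continuous_subtype_val.tendsto _).comp ((continuous_apply q).tendsto _ |>.comp ha)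
  have hbdd : BddBelow (range f) := ⟨-r, forall_mem_range.2 fun q => (a q).2.1⟩
  have hmono : Monotone fun s : ℝ => sInf (f '' {q : ℚ | s < q}) := fun s s' hss' =>
    csInf_le_csInf (hbdd.mono (image_subset_range _ _))
      (let ⟨q, hq⟩ := exists_rat_gt s'; ⟨f q, q, hq, rfl⟩)
      (image_mono fun q hq => hss'.trans_lt hq)
  refine ⟨φ, hφ, _, hmono.countable_not_continuousAt, fun t ht => ?_⟩
  exact ⟨_, tendsto_of_tendsto_rat_of_continuousAt (fun k => hQ (φ k)) hf hbdd (not_not.1 ht)⟩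

section Convex

variable {X : Type*}

lemma ConvexOn.two_mul_le_add_neg {E : Type*} [AddCommGroup E] [Module ℝ E] {S : Submodule ℝ E}
    {p : E → ℝ} (hp : ConvexOn ℝ S p) {x : E} (hx : x ∈ S) : 2 * p 0 ≤ p x + p (-x) := by
  have h := hp.2 hx (S.neg_mem hx) (by norm_num : (0 : ℝ) ≤ 1 / 2)
    (by norm_num : (0 : ℝ) ≤ 1 / 2) (by norm_num)
  rw [smul_neg, add_neg_cancel, smul_eq_mul, smul_eq_mul] at h
  linarith

theorem ConvexOn.sub_le_mul_iSup_abs_sub {S : Submodule ℝ (X → ℝ)} {p : (X → ℝ) → ℝ}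
    (hp : ConvexOn ℝ S p) {R M m : ℝ} (hR : 0 < R)
    (hM : ∀ ζ ∈ S, (∀ x, |ζ x| ≤ 4 * R) → p ζ ≤ M) {ξ η : X → ℝ} (hξ : ξ ∈ S) (hη : η ∈ S)
    (hξR : ∀ x, |ξ x| ≤ R) (hηR : ∀ x, |η x| ≤ R) (hm : m ≤ p ξ) :
    p η - p ξ ≤ (M - m) / R * ⨆ x, |ξ x - η x| := by
  set d := ⨆ x, |ξ x - η x|
  have hbound : ∀ x, |ξ x - η x| ≤ 2 * R := fun x =>
    (abs_sub _ _).trans (by linarith [hξR x, hηR x])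
  have hle : ∀ x, |ξ x - η x| ≤ d := le_ciSup ⟨2 * R, forall_mem_range.2 hbound⟩
  have hd2R : d ≤ 2 * R := Real.iSup_le hbound (by linarith)
  have hmM : m ≤ M := hm.trans (hM ξ hξ fun x => (hξR x).trans (by linarith))
  have hd0 : 0 ≤ d := Real.iSup_nonneg fun x => abs_nonneg (ξ x - η x)
  rcases hd0.eq_or_lt with hd | hd
  · have : η = ξ := funext fun x => by
      have := hle x
      rw [← hd, abs_nonpos_iff, sub_eq_zero] at this
      exact this.symm
    rw [this, ← hd]
    simp
  -- `ζ` is the point of the ray from `ξ` through `η` at sup-distance `d + R` from `ξ`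
  set t := d / (d + R)
  have ht0 : 0 < t := div_pos hd (by linarith)
  have ht1 : t ≤ 1 := (div_le_one (by linarith)).2 (by linarith)
  have hdt : t⁻¹ * d = d + R := by rw [inv_div, div_mul_cancel₀ _ hd.ne']
  set ζ := ξ + t⁻¹ • (η - ξ)
  have hζ : ζ ∈ S := S.add_mem hξ (S.smul_mem _ (S.sub_mem hη hξ))
  have hζR : ∀ x, |ζ x| ≤ 4 * R := fun x => calc
    |ζ x| ≤ |ξ x| + t⁻¹ * |η x - ξ x| := by
        simpa [ζ, abs_mul, abs_of_pos (inv_pos.2 ht0)] using abs_add_le (ξ x) (t⁻¹ * (η x - ξ x))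
    _ ≤ R + t⁻¹ * d := by
        gcongr
        · exact hξR x
        · exact abs_sub_comm (η x) (ξ x) ▸ hle x
    _ ≤ 4 * R := by linarith
  have hcomb : t • ζ + (1 - t) • ξ = η := by
    rw [smul_add, smul_smul, mul_inv_cancel₀ ht0.ne', one_smul]
    module
  have hconv := hp.2 hζ hξ ht0.le (sub_nonneg.2 ht1) (add_sub_cancel t 1)
  rw [hcomb, smul_eq_mul, smul_eq_mul] at hconv
  calc p η - p ξ ≤ t * (p ζ - p ξ) := by linarith
    _ ≤ t * (M - m) := by gcongr; linarith [hM ζ hζ hζR]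
    _ ≤ d / R * (M - m) :=
      mul_le_mul_of_nonneg_right (div_le_div_of_nonneg_left hd0 hR (by linarith)) (by linarith)
    _ = (M - m) / R * d := by ring

theorem ConvexOn.abs_sub_le_mul_iSup_abs_sub {S : Submodule ℝ (X → ℝ)} {p : (X → ℝ) → ℝ}
    (hp : ConvexOn ℝ S p) {R M : ℝ} (hR : 0 < R)
    (hM : ∀ ζ ∈ S, (∀ x, |ζ x| ≤ 4 * R) → p ζ ≤ M) {ξ η : X → ℝ} (hξ : ξ ∈ S) (hη : η ∈ S)
    (hξR : ∀ x, |ξ x| ≤ R) (hηR : ∀ x, |η x| ≤ R) :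
    |p ξ - p η| ≤ 2 * (M - p 0) / R * ⨆ x, |ξ x - η x| := by
  have hlow : ∀ ζ ∈ S, (∀ x, |ζ x| ≤ R) → 2 * p 0 - M ≤ p ζ := fun ζ hζ hζR => by
    have := hM (-ζ) (S.neg_mem hζ) fun x => by simpa using (hζR x).trans (by linarith)
    linarith [hp.two_mul_le_add_neg hζ]
  have hswap : (⨆ x, |η x - ξ x|) = ⨆ x, |ξ x - η x| := iSup_congr fun x => abs_sub_comm _ _
  have hML : M - (2 * p 0 - M) = 2 * (M - p 0) := by ring
  rw [abs_sub_le_iff]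
  constructor
  · have := hp.sub_le_mul_iSup_abs_sub hR hM hη hξ hηR hξR (hlow η hη hηR)
    rwa [hswap, hML] at this
  · have := hp.sub_le_mul_iSup_abs_sub hR hM hξ hη hξR hηR (hlow ξ hξ hξR)
    rwa [hML] at this

end Convex

section Rearrangement

variable {X : Type*} [MeasurableSpace X]

lemma Nonatomic.nullSingletonClass [MeasurableSingletonClass X] {μ : Measure X}
    (hμ : Nonatomic μ) : NullSingletonClass μ where
  measure_singleton x := by
    by_contra h
    obtain ⟨t, hts, -, ht0, htlt⟩ := hμ {x} (measurableSet_singleton x) (pos_iff_ne_zero.2 h)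
    rcases subset_singleton_iff_eq.1 hts with rfl | rfl
    · exact ht0.ne' measure_empty
    · exact htlt.false

lemma exists_measurable_map_eq_uniform [StandardBorelSpace X] (ν : Measure X)
    [IsProbabilityMeasure ν] [NullSingletonClass ν] :
    ∃ g : X → ℝ, Measurable g ∧ ν.map g = volume.restrict (Icc 0 1) := by
  -- an injection into `Ioo (-1) 1`, so that its law is atomless and carried by `Icc (-1) 1`
  set e : X → ℝ := fun x => (orderIsoIooNegOneOne ℝ (embeddingReal X x) : ℝ)
  have he_inj : Function.Injective e := Subtype.val_injective.comp
    ((orderIsoIooNegOneOne ℝ).injective.comp (measurableEmbedding_embeddingReal X).injective)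
  have hmono : Monotone fun y : ℝ => (orderIsoIooNegOneOne ℝ y : ℝ) := fun _ _ h =>
    (orderIsoIooNegOneOne ℝ).monotone h
  have he : Measurable e := hmono.measurable.comp (measurable_embeddingReal X)
  set ρ := ν.map e
  have : IsProbabilityMeasure ρ := Measure.isProbabilityMeasure_map he.aemeasurable
  have : NullSingletonClass ρ := ⟨fun y => by
    rw [Measure.map_apply he (measurableSet_singleton y)]
    exact (subsingleton_singleton.preimage he_inj).measure_zero ν⟩
  have hρ : ∀ᵐ y ∂ρ, y ∈ Icc (-1 : ℝ) 1 := (ae_map_iff he.aemeasurable measurableSet_Icc).2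
    (ae_of_all _ fun x => Ioo_subset_Icc_self (orderIsoIooNegOneOne ℝ _).2)
  refine ⟨cdf ρ ∘ e, (monotone_cdf ρ).measurable.comp he, ?_⟩
  rw [← Measure.map_map (monotone_cdf ρ).measurable he]
  exact map_cdf hρ

lemma exists_monotone_map_comp_eq (ν : Measure X) [IsProbabilityMeasure ν] {g : X → ℝ}
    (hg : Measurable g) (hgU : ν.map g = volume.restrict (Icc 0 1)) {ξ : X → ℝ}
    (hξ : Measurable ξ) {r : ℝ} (hr : ∀ x, |ξ x| ≤ r) :
    ∃ Q : ℝ → ℝ, Monotone Q ∧ (∀ t, |Q t| ≤ r) ∧ ν.map (Q ∘ g) = ν.map ξ := by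
  have : IsProbabilityMeasure (ν.map ξ) := Measure.isProbabilityMeasure_map hξ.aemeasurable
  have hρ : ∀ᵐ y ∂ν.map ξ, y ∈ Icc (-r) r := (ae_map_iff hξ.aemeasurable measurableSet_Icc).2
    (ae_of_all _ fun x => abs_le.1 (hr x))
  refine ⟨boundedQuantile (ν.map ξ) r, monotone_boundedQuantile hρ,
    fun t => abs_le.2 (boundedQuantile_mem_Icc hρ t), ?_⟩
  rw [← Measure.map_map (monotone_boundedQuantile hρ).measurable hg, hgU, map_boundedQuantile hρ]

/-- Every bounded measurable function is equidistributed with a monotone function of `g`. -/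
structure IsQuantileCoordinate (μ : Measure X) (g : X → ℝ) : Prop where
  measurable : Measurable g
  nullSingletonClass_map : NullSingletonClass (μ.map g)
  exists_monotone_comp (ξ : X → ℝ) (r : ℝ) : Measurable ξ → (∀ x, |ξ x| ≤ r) →
    ∃ Q : ℝ → ℝ, Monotone Q ∧ (∀ t, |Q t| ≤ r) ∧ μ.map (Q ∘ g) = μ.map ξ

lemma exists_isQuantileCoordinate [StandardBorelSpace X] (μ : Measure X) [IsFiniteMeasure μ]
    [NeZero μ] [NullSingletonClass μ] : ∃ g : X → ℝ, IsQuantileCoordinate μ g := by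
  have : NullSingletonClass ((μ univ)⁻¹ • μ) :=
    ⟨fun x => by rw [Measure.smul_apply, measure_singleton, smul_zero]⟩
  obtain ⟨g, hg, hgU⟩ := exists_measurable_map_eq_uniform ((μ univ)⁻¹ • μ)
  have hmap : ∀ f : X → ℝ, μ.map f = μ univ • ((μ univ)⁻¹ • μ).map f := fun f => by
    rw [Measure.map_smul, smul_smul,
      ENNReal.mul_inv_cancel (Measure.measure_univ_ne_zero.2 (NeZero.ne μ))
        (measure_ne_top μ univ), one_smul]
  refine ⟨g, hg, ⟨fun y => ?_⟩, fun ξ r hξ hr => ?_⟩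
  · rw [hmap, hgU, Measure.smul_apply, measure_singleton, smul_zero]
  · obtain ⟨Q, hQ, hQr, hQξ⟩ := exists_monotone_map_comp_eq _ hg hgU hξ hr
    exact ⟨Q, hQ, hQr, by rw [hmap, hmap ξ, hQξ]⟩

lemma IsQuantileCoordinate.exists_subseq_ae_tendsto {μ : Measure X} {g : X → ℝ}
    (hg : IsQuantileCoordinate μ g) {ξ : ℕ → X → ℝ} {r : ℝ} (hξ : ∀ n, Measurable (ξ n))
    (hr : ∀ n x, |ξ n x| ≤ r) :
    ∃ φ : ℕ → ℕ, StrictMono φ ∧ ∃ η : ℕ → X → ℝ, (∀ k, Measurable (η k)) ∧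
      (∀ k x, |η k x| ≤ r) ∧ (∀ k, μ.map (η k) = μ.map (ξ (φ k))) ∧
      ∀ᵐ x ∂μ, ∃ l, Tendsto (fun k => η k x) atTop (𝓝 l) := by
  choose Q hQ hQr hQξ using fun n => hg.exists_monotone_comp (ξ n) r (hξ n) (hr n)
  obtain ⟨φ, hφ, D, hD, hconv⟩ :=
    exists_subseq_tendsto_of_monotone hQ fun k t => abs_le.1 (hQr k t)
  refine ⟨φ, hφ, fun k => Q (φ k) ∘ g, fun k => (hQ (φ k)).measurable.comp hg.measurable,
    fun k x => hQr _ _, fun k => hQξ _, ?_⟩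
  have : NullSingletonClass (μ.map g) := hg.nullSingletonClass_map
  have hnull : μ (g ⁻¹' D) = 0 := by
    rw [← Measure.map_apply hg.measurable hD.measurableSet]
    exact hD.measure_zero _
  filter_upwards [measure_eq_zero_iff_ae_notMem.1 hnull] with x hx using hconv (g x) hx

variable (X) in
def boundedMeasurable : Submodule ℝ (X → ℝ) where
  carrier := {f | Measurable f ∧ ∃ M : ℝ, ∀ x, |f x| ≤ M}
  zero_mem' := ⟨measurable_const, 0, fun _ => by simp⟩
  add_mem' := fun ⟨hf, M, hM⟩ ⟨hg, N, hN⟩ =>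
    ⟨hf.add hg, M + N, fun x => (abs_add_le _ _).trans (add_le_add (hM x) (hN x))⟩
  smul_mem' := fun c f ⟨hf, M, hM⟩ =>
    ⟨hf.const_smul c, |c| * M, fun x => by
      rw [Pi.smul_apply, smul_eq_mul, abs_mul]
      exact mul_le_mul_of_nonneg_left (hM x) (abs_nonneg c)⟩

/-- Along an unbounded sequence on a ball, Helly's theorem yields a.e. convergent rearrangements. -/
theorem IsQuantileCoordinate.exists_forall_le {μ : Measure X} {g : X → ℝ}
    (hg : IsQuantileCoordinate μ g) {p : (X → ℝ) → ℝ}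
    (hrear : ∀ ξ ∈ boundedMeasurable X, ∀ η ∈ boundedMeasurable X,
      μ.map ξ = μ.map η → p ξ = p η)
    (hsc : StronglyContinuousOn μ (boundedMeasurable X) p) (r : ℝ) :
    ∃ M, ∀ ξ ∈ boundedMeasurable X, (∀ x, |ξ x| ≤ r) → p ξ ≤ M := by
  by_contra! h
  choose ξ hξB hξr hξp using fun n : ℕ => h n
  obtain ⟨φ, hφ, η, hη, hηr, hηξ, hae⟩ := hg.exists_subseq_ae_tendsto (fun n => (hξB n).1) hξr
  have hηB : ∀ k, η k ∈ boundedMeasurable X := fun k => ⟨hη k, r, hηr k⟩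
  obtain ⟨L, hL⟩ := hsc η hηB ⟨r, hηr⟩ hae
  have htop : Tendsto (fun k => p (η k)) atTop atTop := by
    refine tendsto_atTop_mono (fun k => ?_) tendsto_natCast_atTop_atTop
    rw [hrear _ (hηB k) _ (hξB (φ k)) (hηξ k)]
    exact (Nat.cast_le.2 hφ.le_apply).trans (hξp (φ k)).le
  exact not_tendsto_nhds_of_tendsto_atTop htop L hL

end Rearrangement

/-- Theorem 5.4: a strict-rearrangement-invariant, convex, strongly continuous function
on the bounded Borel functions of a Polish space with a finite nonatomic Borel measure
is Lipschitz continuous on bounded sets (for the sup norm). -/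
theorem stmt8 {X : Type*} [TopologicalSpace X] [PolishSpace X] [MeasurableSpace X]
    [BorelSpace X] (μ : Measure X) [IsFiniteMeasure μ]
    (hμ : Nonatomic μ) (hpos : 0 < μ Set.univ)
    (B : Set (X → ℝ)) (hB : B = {f : X → ℝ | Measurable f ∧ ∃ M : ℝ, ∀ x, |f x| ≤ M})
    (p : (X → ℝ) → ℝ)
    (hconv : ConvexOn ℝ B p)
    (hrear : ∀ ξ ∈ B, ∀ η ∈ B, Measure.map ξ μ = Measure.map η μ → p ξ = p η)
    (hsc : StronglyContinuousOn μ B p) :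
    ∀ R : ℝ, 0 < R → ∃ L : ℝ, 0 < L ∧ ∀ ξ ∈ B, ∀ η ∈ B,
      (∀ x, |ξ x| ≤ R) → (∀ x, |η x| ≤ R) →
      |p ξ - p η| ≤ L * ⨆ x, |ξ x - η x| := by
  obtain rfl : B = boundedMeasurable X := hB
  have : NullSingletonClass μ := hμ.nullSingletonClass
  have : NeZero μ := ⟨Measure.measure_univ_ne_zero.1 hpos.ne'⟩
  obtain ⟨g, hg⟩ := exists_isQuantileCoordinate μ
  intro R hR
  obtain ⟨M, hM⟩ := hg.exists_forall_le hrear hsc (4 * R)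
  have hM0 : p 0 ≤ M := hM 0 (boundedMeasurable X).zero_mem fun x => by
    rw [Pi.zero_apply, abs_zero]; linarith
  have hL : 0 ≤ 2 * (M - p 0) / R := div_nonneg (by linarith) hR.le
  refine ⟨2 * (M - p 0) / R + 1, by linarith, fun ξ hξ η hη hξR hηR => ?_⟩
  calc |p ξ - p η| ≤ 2 * (M - p 0) / R * ⨆ x, |ξ x - η x| :=
        hconv.abs_sub_le_mul_iSup_abs_sub hR hM hξ hη hξR hηR
    _ ≤ (2 * (M - p 0) / R + 1) * ⨆ x, |ξ x - η x| :=
        mul_le_mul_of_nonneg_right (by linarith) (Real.iSup_nonneg fun _ => abs_nonneg _)
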